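/- arXiv:2505.06751 — 8 statements merged into one kernel-verified Lean document; each statement's English description precedes it below -/
import Mathlib

section
/- Let a : Fin q → (Fin n →₀ ℕ) be the exponent vectors of q monomials m_1, …, m_q, and let c : Fin n →₀ ℕ be the exponent vector of any monomial m. Let W be the set of vertices (i,j) of M_q² (pairs i ≤ j in Fin q) such that m_i m_j divides m, i.e., a i + a j ≤ c pointwise. Define a simple graph on W where two distinct vertices are adjacent if and only if not both of them are diagonal. Then this graph is preconnected (so the induced subcomplex (M_q²)_m is empty or connected, which is the key step showing that M_q² supports a free resolution of I² for I = (m_1, …, m_q)). -/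
/-- The vertex set of the simplicial complex `M_q²`: pairs `(i,j)` with `i ≤ j` in `Fin q`. -/
abbrev MqVertex (q : ℕ) := {p : Fin q × Fin q // p.1 ≤ p.2}

/-- Given exponent vectors `a i` of monomials `m_1, …, m_q` and the exponent vector `c` of a
monomial `m`, this is the graph on the vertices `(i,j)` of `M_q²` whose labels `m_i m_j`
divide `m`, where two distinct vertices are adjacent iff not both are diagonal. -/
def divGraph (q n : ℕ) (a : Fin q → (Fin n →₀ ℕ)) (c : Fin n →₀ ℕ) :
    SimpleGraph {v : MqVertex q // a v.1.1 + a v.1.2 ≤ c} where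
  Adj v w := v ≠ w ∧ ¬ (v.1.1.1 = v.1.1.2 ∧ w.1.1.1 = w.1.1.2)
  symm := by
    constructor
    intro v w h
    exact ⟨h.1.symm, fun hd => h.2 ⟨hd.2, hd.1⟩⟩
  loopless := by
    constructor
    intro v h
    exact h.1 rfl

/-! Every off-diagonal vertex is adjacent to all other vertices, so only two diagonal vertices
`(i,i)` and `(j,j)` need a path. If `m_i²` and `m_j²` both divide `m`, then so does `m_i m_j`
(coordinatewise, `x + y ≤ max x y + max x y`), so `(min i j, max i j)` is an off-diagonal vertex
of `(M_q²)_m` joining them. -/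

theorem add_le_of_add_self_le {α : Type*} [AddCommMonoid α] [LinearOrder α]
    [IsOrderedAddMonoid α] {x y c : α} (hx : x + x ≤ c) (hy : y + y ≤ c) : x + y ≤ c := by
  rcases le_total x y with hxy | hyx
  · exact (add_le_add hxy le_rfl).trans hy
  · exact (add_le_add le_rfl hyx).trans hx

theorem Finsupp.add_le_of_add_self_le {ι α : Type*} [AddCommMonoid α] [LinearOrder α]
    [IsOrderedAddMonoid α] {x y c : ι →₀ α} (hx : x + x ≤ c) (hy : y + y ≤ c) : x + y ≤ c :=
  Finsupp.le_def.mpr fun k =>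
    _root_.add_le_of_add_self_le (Finsupp.le_def.mp hx k) (Finsupp.le_def.mp hy k)

namespace MqVertex

variable {q : ℕ}

/-- The vertex `ℓ_{i,j} = ℓ_{j,i}`, with its indices put in order. -/
def ofPair (i j : Fin q) : MqVertex q := ⟨(min i j, max i j), min_le_max⟩

theorem ofPair_label {M : Type*} [AddCommMagma M] (f : Fin q → M) (i j : Fin q) :
    f (ofPair i j).1.1 + f (ofPair i j).1.2 = f i + f j := by
  rcases le_total i j with hij | hji
  · simp [ofPair, hij]
  · simp [ofPair, hji, add_comm]

theorem ofPair_ne_diag {i j : Fin q} (hij : i ≠ j) : (ofPair i j).1.1 ≠ (ofPair i j).1.2 :=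
  (min_lt_max.mpr hij).ne

end MqVertex

section divGraph

variable {q n : ℕ} {a : Fin q → (Fin n →₀ ℕ)} {c : Fin n →₀ ℕ}

theorem divGraph_adj_of_ne_diag {v w : {v : MqVertex q // a v.1.1 + a v.1.2 ≤ c}} (hvw : v ≠ w)
    (hw : w.1.1.1 ≠ w.1.1.2) : (divGraph q n a c).Adj v w :=
  ⟨hvw, fun h => hw h.2⟩

theorem divGraph_adj_of_diag_of_ne_diag {v w : {v : MqVertex q // a v.1.1 + a v.1.2 ≤ c}}
    (hv : v.1.1.1 = v.1.1.2) (hw : w.1.1.1 ≠ w.1.1.2) : (divGraph q n a c).Adj v w :=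
  divGraph_adj_of_ne_diag (by rintro rfl; exact hw hv) hw

theorem divGraph_reachable_of_diag {v w : {v : MqVertex q // a v.1.1 + a v.1.2 ≤ c}}
    (hvw : v ≠ w) (hv : v.1.1.1 = v.1.1.2) (hw : w.1.1.1 = w.1.1.2) :
    (divGraph q n a c).Reachable v w := by
  obtain ⟨⟨⟨i, i'⟩, _⟩, hvc⟩ := v
  obtain ⟨⟨⟨j, j'⟩, _⟩, hwc⟩ := w
  dsimp only at hv hw hvc hwc
  subst hv hw
  have hij : i ≠ j := by rintro rfl; exact hvw rfl
  have hmid : a (MqVertex.ofPair i j).1.1 + a (MqVertex.ofPair i j).1.2 ≤ c := by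
    rw [MqVertex.ofPair_label]
    exact Finsupp.add_le_of_add_self_le hvc hwc
  have hmid_ne_diag := MqVertex.ofPair_ne_diag hij
  let mid : {v : MqVertex q // a v.1.1 + a v.1.2 ≤ c} := ⟨MqVertex.ofPair i j, hmid⟩
  have hv_mid : (divGraph q n a c).Adj ⟨⟨(i, i), le_rfl⟩, hvc⟩ mid :=
    divGraph_adj_of_diag_of_ne_diag rfl hmid_ne_diag
  have hw_mid : (divGraph q n a c).Adj ⟨⟨(j, j), le_rfl⟩, hwc⟩ mid :=
    divGraph_adj_of_diag_of_ne_diag rfl hmid_ne_diag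
  exact hv_mid.reachable.trans hw_mid.symm.reachable

end divGraph

theorem divGraph_preconnected_general (q n : ℕ) (a : Fin q → (Fin n →₀ ℕ))
    (c : Fin n →₀ ℕ) : (divGraph q n a c).Preconnected := by
  intro v w
  by_cases hvw : v = w
  · exact hvw ▸ .refl v
  by_cases hw : w.1.1.1 = w.1.1.2
  · by_cases hv : v.1.1.1 = v.1.1.2
    · exact divGraph_reachable_of_diag hvw hv hw
    · exact (divGraph_adj_of_ne_diag (Ne.symm hvw) hv).symm.reachable
  · exact (divGraph_adj_of_ne_diag hvw hw).reachable

/-- The graph on the vertices of `(M_q²)_m` (vertices of `M_q²` whose monomial label divides `m`),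
in which two distinct vertices are adjacent iff not both are diagonal, is preconnected.
Hence the induced subcomplex `(M_q²)_m` is empty or connected. -/
theorem divGraph_preconnected (q n : ℕ) (hq : 0 < q) (a : Fin q → (Fin n →₀ ℕ))
    (c : Fin n →₀ ℕ) : (divGraph q n a c).Preconnected :=
  divGraph_preconnected_general q n a c
end

section
/- For any positive integer q and any d ≥ 0, the number of d-dimensional faces of M_q², i.e., the number of subsets γ of the vertex set V of M_q² with |γ| = d + 1 containing at most one diagonal vertex, equals C(q(q−1)/2, d+1) + q·C(q(q−1)/2, d). (Consequently, for any monomial ideal I minimally generated by q ≥ 2 monomials, β_d(I²) ≤ C(q(q−1)/2, d+1) + q·C(q(q−1)/2, d).) -/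
/-!
A face either has no diagonal vertex, and is then a `(d+1)`-subset of the `C(q,2)` off-diagonal
vertices, or has exactly one diagonal vertex `v`, and is then `v` together with a `d`-subset of
the off-diagonal vertices.
-/

open Finset

section
variable {α : Type*} [Fintype α] [DecidableEq α] (p : α → Prop) [DecidablePred p] (k : ℕ)

lemma filter_card_filter_eq_zero_eq_powersetCard :
    univ.filter (fun t : Finset α => #t = k ∧ #(t.filter p) = 0) =
      (univ.filter fun a => ¬p a).powersetCard k := by
  ext t
  simp only [mem_filter, mem_univ, true_and, mem_powersetCard, card_eq_zero,
    filter_eq_empty_iff, subset_iff]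
  tauto

lemma filter_filter_eq_singleton_eq_filter_powersetCard {v : α} (hv : p v) :
    univ.filter (fun t : Finset α => #t = k + 1 ∧ t.filter p = {v}) =
      ((insert v (univ.filter fun a => ¬p a)).powersetCard (k + 1)).filter ({v} ⊆ ·) := by
  ext t
  simp only [mem_filter, mem_univ, true_and, mem_powersetCard, Finset.ext_iff, mem_singleton,
    subset_iff, mem_insert]
  grind

lemma card_filter_filter_eq_singleton {v : α} (hv : p v) :
    #(univ.filter fun t : Finset α => #t = k + 1 ∧ t.filter p = {v}) =
      (#(univ.filter fun a => ¬p a)).choose k := by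
  rw [filter_filter_eq_singleton_eq_filter_powersetCard p k hv,
    card_filter_powersetCard_subset _ _ _ (singleton_subset_iff.2 (mem_insert_self _ _))
      (by simp),
    card_insert_of_notMem (by simp [hv])]
  simp

lemma card_filter_card_filter_eq_one :
    #(univ.filter fun t : Finset α => #t = k + 1 ∧ #(t.filter p) = 1) =
      #(univ.filter p) * (#(univ.filter fun a => ¬p a)).choose k := by
  have hsplit : univ.filter (fun t : Finset α => #t = k + 1 ∧ #(t.filter p) = 1) =
      (univ.filter p).biUnion fun v => univ.filter fun t => #t = k + 1 ∧ t.filter p = {v} := by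
    ext t
    simp only [mem_filter, mem_univ, true_and, mem_biUnion, card_eq_one]
    constructor
    · rintro ⟨hcard, v, hv⟩
      exact ⟨v, (mem_filter.1 (hv ▸ mem_singleton_self v)).2, hcard, hv⟩
    · rintro ⟨v, -, hcard, hv⟩
      exact ⟨hcard, v, hv⟩
  have hdisj : (univ.filter p : Set α).PairwiseDisjoint
      fun v => univ.filter fun t : Finset α => #t = k + 1 ∧ t.filter p = {v} := by
    intro v _ w _ hvw
    simp only [Function.onFun, disjoint_left, mem_filter, mem_univ, true_and]
    rintro t ⟨-, hv⟩ ⟨-, hw⟩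
    exact hvw (singleton_injective (hv.symm.trans hw))
  rw [hsplit, card_biUnion hdisj,
    sum_congr rfl fun v hv => card_filter_filter_eq_singleton p k (mem_filter.1 hv).2,
    sum_const, smul_eq_mul]

theorem card_filter_card_filter_le_one :
    #(univ.filter fun t : Finset α => #t = k + 1 ∧ #(t.filter p) ≤ 1) =
      (#(univ.filter fun a => ¬p a)).choose (k + 1) +
        #(univ.filter p) * (#(univ.filter fun a => ¬p a)).choose k := by
  have hsplit : univ.filter (fun t : Finset α => #t = k + 1 ∧ #(t.filter p) ≤ 1) =
      univ.filter (fun t : Finset α => #t = k + 1 ∧ #(t.filter p) = 0) ∪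
        univ.filter (fun t : Finset α => #t = k + 1 ∧ #(t.filter p) = 1) := by
    rw [← filter_or]
    exact filter_congr fun t _ => by omega
  rw [hsplit, card_union_of_disjoint (disjoint_filter.2 fun t _ _ _ => by omega),
    filter_card_filter_eq_zero_eq_powersetCard, card_powersetCard, card_filter_card_filter_eq_one]

end

lemma card_diagonal_mqVertex (q : ℕ) :
    #(univ.filter fun v : MqVertex q => v.1.1 = v.1.2) = q := by
  have : univ.filter (fun v : MqVertex q => v.1.1 = v.1.2) =
      univ.image fun i : Fin q => ⟨(i, i), le_rfl⟩ := by
    ext ⟨⟨i, j⟩, hij⟩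
    simp [eq_comm]
  rw [this, card_image_of_injective _ fun i j h => congrArg (·.1.1) h, card_univ,
    Fintype.card_fin]

lemma card_offDiagonal_mqVertex (q : ℕ) :
    #(univ.filter fun v : MqVertex q => ¬v.1.1 = v.1.2) = q.choose 2 := by
  have : (univ.filter fun v : MqVertex q => ¬v.1.1 = v.1.2).map (Function.Embedding.subtype _) =
      univ.filter fun x : Fin q × Fin q => x.1 < x.2 := by
    ext ⟨i, j⟩
    simp [lt_iff_le_and_ne, and_comm]
  rw [← card_map, this, ← univ_product_univ, card_product_filter_lt, card_univ, Fintype.card_fin]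

theorem card_faces_Mq_general (q d : ℕ) :
    (Finset.univ.filter (fun γ : Finset (MqVertex q) =>
        γ.card = d + 1 ∧ (γ.filter (fun v => v.1.1 = v.1.2)).card ≤ 1)).card
      = (q * (q - 1) / 2).choose (d + 1) + q * (q * (q - 1) / 2).choose d := by
  rw [card_filter_card_filter_le_one, card_diagonal_mqVertex, card_offDiagonal_mqVertex,
    Nat.choose_two_right]

/-- The number of `d`-dimensional faces of `M_q²`, i.e. subsets of the vertex set of cardinality
`d+1` containing at most one diagonal vertex, equals
`C(q(q-1)/2, d+1) + q * C(q(q-1)/2, d)`. -/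
theorem card_faces_Mq (q d : ℕ) (hq : 0 < q) :
    (Finset.univ.filter (fun γ : Finset (MqVertex q) =>
        γ.card = d + 1 ∧ (γ.filter (fun v => v.1.1 = v.1.2)).card ≤ 1)).card
      = (q * (q - 1) / 2).choose (d + 1) + q * (q * (q - 1) / 2).choose d :=
  card_faces_Mq_general q d
end

section
/- Let q be a positive integer and K a field. For any indices with i₁ ≤ j₁ and i₂ ≤ j₂ in Fin q such that the ordered pairs (i₁, j₁) ≠ (i₂, j₂), the monomial τ_{i₁}·τ_{j₁} does not divide τ_{i₂}·τ_{j₂} in MvPolynomial (Equiv.Perm (Fin q)) K. Hence {τ_i τ_j : 1 ≤ i ≤ j ≤ q} is the minimal generating set of T_q². -/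
/-!
Over a field, `τ_{i₁} τ_{j₁} ∣ τ_{i₂} τ_{j₂}` says that `σ i₁ + σ j₁ ≤ σ i₂ + σ j₂` for every
permutation `σ`. Applying this to `rev ∘ σ` reverses the inequality, so the weighted sums of the
multisets `{i₁, j₁}` and `{i₂, j₂}` agree for every `σ`. Composing `σ` with a transposition
`(u v)` changes such a sum by `(g u - g v) (σ v - σ u)`, where `g` is the difference of the
multiplicity functions; hence `g` is constant, and since both multisets have two elements it
vanishes. The ordering conventions then force `(i₁, j₁) = (i₂, j₂)`.
-/

/-- The generator `τ_i = ∏_{σ ∈ S_q} x_σ^{σ(i)}` of the permutation ideal `T_q`, where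
`σ(i) = (σ i : ℕ) + 1` is the 1-indexed value of the permutation `σ` at `i`. -/
noncomputable def tauGen (K : Type*) [Field K] (q : ℕ) (i : Fin q) :
    MvPolynomial (Equiv.Perm (Fin q)) K :=
  ∏ σ : Equiv.Perm (Fin q), MvPolynomial.X σ ^ ((σ i : ℕ) + 1)

open Equiv

theorem Multiset.sum_map_eq_sum_count_nsmul {α M : Type*} [Fintype α] [DecidableEq α]
    [AddCommMonoid M] (m : Multiset α) (f : α → M) :
    (m.map f).sum = ∑ x, m.count x • f x := by
  rw [Finset.sum_multiset_map_count]
  refine Finset.sum_subset (Finset.subset_univ _) fun x _ hx => ?_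
  rw [Multiset.count_eq_zero_of_notMem (by simpa using hx), zero_smul]

theorem Fintype.sum_mul_comp_swap {α : Type*} [Fintype α] [DecidableEq α] (g w : α → ℤ)
    (u v : α) :
    ∑ x, g x * w (swap u v x) = ∑ x, g x * w x + (g u - g v) * (w v - w u) := by
  rcases eq_or_ne u v with rfl | huv
  · simp
  rw [← sub_eq_iff_eq_add', ← Finset.sum_sub_distrib,
    Fintype.sum_eq_add u v huv fun x hx => by simp [swap_apply_of_ne_of_ne hx.1 hx.2]]
  simp only [swap_apply_left, swap_apply_right]
  ring

theorem Multiset.eq_of_forall_perm_sum_map_eq {α : Type*} [Fintype α] [DecidableEq α]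
    {w : α → ℤ} (hw : Function.Injective w) {m n : Multiset α} (hcard : m.card = n.card)
    (h : ∀ σ : Perm α, (m.map (w ∘ σ)).sum = (n.map (w ∘ σ)).sum) : m = n := by
  set g : α → ℤ := fun x => m.count x - n.count x
  have hg : ∀ σ : Perm α, ∑ x, g x * w (σ x) = 0 := fun σ => by
    simpa [g, sub_mul, Finset.sum_sub_distrib, Multiset.sum_map_eq_sum_count_nsmul, sub_eq_zero]
      using h σ
  have hconst : ∀ u v, g u = g v := fun u v => by
    rcases eq_or_ne u v with rfl | huv
    · rfl
    have hswap := Fintype.sum_mul_comp_swap g w u v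
    rw [hg, (by simpa using hg 1 : ∑ x, g x * w x = 0), zero_add, eq_comm] at hswap
    simpa [sub_eq_zero, hw.ne huv.symm] using hswap
  have hsum : ∑ x, g x = 0 := by
    simp only [g, Finset.sum_sub_distrib, ← Nat.cast_sum,
      Multiset.sum_count_eq_card fun _ _ => Finset.mem_univ _, hcard, sub_self]
  ext x
  have hcard_mul : Fintype.card α * g x = 0 := by
    rw [← hsum, Finset.sum_congr rfl fun y _ => hconst y x, Finset.sum_const, Finset.card_univ,
      nsmul_eq_mul]
  have hgx : g x = 0 :=
    (mul_eq_zero.mp hcard_mul).resolve_left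
      (Nat.cast_ne_zero.mpr (Fintype.card_pos_iff.2 ⟨x⟩).ne')
  simpa [g, sub_eq_zero] using hgx

theorem Multiset.eq_and_eq_of_pair_eq_pair {α : Type*} [LinearOrder α] {a b c d : α}
    (h : ({a, b} : Multiset α) = {c, d}) (hab : a ≤ b) (hcd : c ≤ d) : a = c ∧ b = d := by
  have ha : a ∈ ({c, d} : Multiset α) := h ▸ by simp
  have hb : b ∈ ({c, d} : Multiset α) := h ▸ by simp
  have hc : c ∈ ({a, b} : Multiset α) := h ▸ by simp
  have hd : d ∈ ({a, b} : Multiset α) := h ▸ by simp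
  simp only [Multiset.insert_eq_cons, Multiset.mem_cons, Multiset.mem_singleton] at ha hb hc hd
  grind

theorem Multiset.sum_map_val_rev {α : Type*} {q : ℕ} (m : Multiset α) (f : α → Fin q) :
    (m.map fun x => ((f x).rev : ℤ)).sum =
      m.card * ((q : ℤ) - 1) - (m.map fun x => (f x : ℤ)).sum := by
  induction m using Multiset.induction_on with
  | empty => simp
  | cons a m ih =>
    rw [Multiset.map_cons, Multiset.sum_cons, ih, Multiset.map_cons, Multiset.sum_cons,
      Multiset.card_cons, Fin.val_rev, Nat.cast_sub (f a).is_lt]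
    push_cast
    ring

theorem Multiset.eq_of_forall_perm_sum_map_val_le {q : ℕ} {m n : Multiset (Fin q)}
    (hcard : m.card = n.card)
    (h : ∀ σ : Perm (Fin q), (m.map fun x => (σ x : ℤ)).sum ≤ (n.map fun x => (σ x : ℤ)).sum) :
    m = n := by
  refine Multiset.eq_of_forall_perm_sum_map_eq (w := fun x : Fin q => (x : ℤ))
    (Nat.cast_injective.comp Fin.val_injective) hcard fun σ => (h σ).antisymm ?_
  have := h (Fin.revPerm * σ)
  simp only [Perm.mul_apply, Fin.revPerm_apply, Multiset.sum_map_val_rev, hcard] at this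
  exact (sub_le_sub_iff_left _).mp this

theorem tauGen_eq_monomial (K : Type*) [Field K] (q : ℕ) (i : Fin q) :
    tauGen K q i =
      MvPolynomial.monomial
        (Finsupp.equivFunOnFinite.symm fun σ : Perm (Fin q) => (σ i : ℕ) + 1) 1 := by
  rw [tauGen, ← MvPolynomial.prod_X_pow_eq_monomial]
  exact (Finset.prod_subset (Finset.subset_univ _) fun σ _ hσ => by simp at hσ).symm

theorem tauGen_mul_dvd_tauGen_mul_iff (K : Type*) [Field K] {q : ℕ} (i₁ j₁ i₂ j₂ : Fin q) :
    tauGen K q i₁ * tauGen K q j₁ ∣ tauGen K q i₂ * tauGen K q j₂ ↔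
      ∀ σ : Perm (Fin q), (σ i₁ : ℕ) + σ j₁ ≤ σ i₂ + σ j₂ := by
  simp only [tauGen_eq_monomial, MvPolynomial.monomial_mul, MvPolynomial.monomial_dvd_monomial,
    one_ne_zero, false_or, one_mul, dvd_refl, and_true, Finsupp.le_def, Finsupp.add_apply,
    Finsupp.coe_equivFunOnFinite_symm]
  exact forall_congr' fun σ => by omega

theorem tau_mul_not_dvd_tau_mul_general (K : Type*) [Field K] (q : ℕ)
    (i₁ j₁ i₂ j₂ : Fin q) (h₁ : i₁ ≤ j₁) (h₂ : i₂ ≤ j₂)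
    (hne : (i₁, j₁) ≠ (i₂, j₂)) :
    ¬ (tauGen K q i₁ * tauGen K q j₁ ∣ tauGen K q i₂ * tauGen K q j₂) := by
  intro hdvd
  have hpair : ({i₁, j₁} : Multiset (Fin q)) = {i₂, j₂} :=
    Multiset.eq_of_forall_perm_sum_map_val_le rfl fun σ => by
      have := (tauGen_mul_dvd_tauGen_mul_iff K i₁ j₁ i₂ j₂).mp hdvd σ
      simp only [Multiset.insert_eq_cons, Multiset.map_cons, Multiset.map_singleton,
        Multiset.sum_cons, Multiset.sum_singleton]
      exact_mod_cast this
  obtain ⟨rfl, rfl⟩ := Multiset.eq_and_eq_of_pair_eq_pair hpair h₁ h₂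
  exact hne rfl

/-- For pairs `i₁ ≤ j₁` and `i₂ ≤ j₂` in `Fin q` with `(i₁, j₁) ≠ (i₂, j₂)`, the monomial
`τ_{i₁} τ_{j₁}` does not divide `τ_{i₂} τ_{j₂}`; hence `{τ_i τ_j : 1 ≤ i ≤ j ≤ q}` is the
minimal generating set of `T_q²`. -/
theorem tau_mul_not_dvd_tau_mul (K : Type*) [Field K] (q : ℕ) (hq : 0 < q)
    (i₁ j₁ i₂ j₂ : Fin q) (h₁ : i₁ ≤ j₁) (h₂ : i₂ ≤ j₂)
    (hne : (i₁, j₁) ≠ (i₂, j₂)) :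
    ¬ (tauGen K q i₁ * tauGen K q j₁ ∣ tauGen K q i₂ * tauGen K q j₂) :=
  tau_mul_not_dvd_tau_mul_general K q i₁ j₁ i₂ j₂ h₁ h₂ hne
end

section
/- Let q be a positive integer and K a field. The map sending a pair (i, j) with i ≤ j in Fin q to the monomial τ_i·τ_j ∈ MvPolynomial (Equiv.Perm (Fin q)) K is injective; in particular, the minimal generating set of T_q² has exactly C(q,2) + q = q(q+1)/2 elements, which equals the number of vertices of M_q². -/
/-!
The exponent of `X_σ` in `τ_i τ_j` is `σ(i) + σ(j)`, so `τ_i τ_j = τ_{i'} τ_{j'}` forces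
`σ i + σ j = σ i' + σ j'` for every permutation `σ`. Comparing `σ = 1` with a transposition
`(u v)` shows that the signed multiplicity `𝟙_i + 𝟙_j - 𝟙_{i'} - 𝟙_{j'}` takes the same value at
`u` and `v`; being constant with total `0`, it vanishes, so `{i, j} = {i', j'}` as multisets.
The count comes from identifying `M_q²` with `Sym2 (Fin q)`.
-/

open Finset

theorem MvPolynomial.prod_X_pow_eq_monomial_equivFunOnFinite {σ R : Type*} [Fintype σ]
    [CommSemiring R] (e : σ → ℕ) :
    ∏ s, (X s : MvPolynomial σ R) ^ e s = monomial (Finsupp.equivFunOnFinite.symm e) 1 := by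
  rw [monomial_eq, C_1, one_mul, Finsupp.prod_fintype _ _ (fun _ => pow_zero _)]
  rfl

theorem Multiset.sum_map_eq_sum_count_smul {α M : Type*} [Fintype α] [DecidableEq α]
    [AddCommMonoid M] (m : Multiset α) (g : α → M) :
    (m.map g).sum = ∑ a, m.count a • g a := by
  rw [Finset.sum_multiset_map_count]
  exact Finset.sum_subset (subset_univ _) fun a _ ha => by
    rw [Multiset.count_eq_zero.mpr (by simpa using ha), zero_smul]

theorem apply_eq_apply_of_perm_sum_mul_invariant {α R : Type*} [Fintype α] [DecidableEq α]
    [CommRing R] [IsDomain R] {f : α → R} (hf : Function.Injective f) {F : α → R}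
    (h : ∀ σ : Equiv.Perm α, ∑ u, f (σ u) * F u = ∑ u, f u * F u) (u v : α) : F u = F v := by
  by_cases huv : u = v
  · rw [huv]
  have hswap : ∑ w, (f (Equiv.swap u v w) - f w) * F w = (f v - f u) * (F u - F v) := by
    rw [Fintype.sum_eq_add u v huv fun w hw => by
      rw [Equiv.swap_apply_of_ne_of_ne hw.1 hw.2, sub_self, zero_mul]]
    simp only [Equiv.swap_apply_left, Equiv.swap_apply_right]
    ring
  have hzero : ∑ w, (f (Equiv.swap u v w) - f w) * F w = 0 := by
    simp only [sub_mul, sum_sub_distrib, h, sub_self]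
  rw [hswap] at hzero
  exact sub_eq_zero.mp ((mul_eq_zero.mp hzero).resolve_left
    (sub_ne_zero.mpr (hf.ne (Ne.symm huv))))

theorem Multiset.eq_of_forall_perm_sum_map_eq_s10 {α R : Type*} [Fintype α] [DecidableEq α]
    [CommRing R] [IsDomain R] [CharZero R] {f : α → R} (hf : Function.Injective f)
    {m m' : Multiset α} (hcard : card m = card m')
    (h : ∀ σ : Equiv.Perm α, (m.map (f ∘ σ)).sum = (m'.map (f ∘ σ)).sum) : m = m' := by
  set F : α → R := fun a => (m.count a : R) - m'.count a
  have hsum : ∀ σ : Equiv.Perm α, ∑ u, f (σ u) * F u = 0 := fun σ => by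
    have := h σ
    simp only [Multiset.sum_map_eq_sum_count_smul, nsmul_eq_mul, Function.comp_apply] at this
    simp only [F, mul_comm (f _), sub_mul, sum_sub_distrib, this, sub_self]
  have hconst := apply_eq_apply_of_perm_sum_mul_invariant hf (F := F) fun σ => by
    rw [hsum σ, ← hsum 1]; rfl
  have htotal : ∑ u, F u = 0 := by
    simp only [F, sum_sub_distrib, ← Nat.cast_sum,
      Multiset.sum_count_eq_card fun a _ => mem_univ a, hcard, sub_self]
  ext a
  have : (Fintype.card α : R) * F a = 0 := by
    rw [← htotal, Finset.sum_congr rfl fun u _ => hconst u a, sum_const, card_univ, nsmul_eq_mul]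
  have hα : (Fintype.card α : R) ≠ 0 := Nat.cast_ne_zero.mpr (Fintype.card_pos_iff.mpr ⟨a⟩).ne'
  exact_mod_cast sub_eq_zero.mp ((mul_eq_zero.mp this).resolve_left hα)

theorem Multiset.pair_eq_pair_of_le {α : Type*} [LinearOrder α] {a b c d : α} (hab : a ≤ b)
    (hcd : c ≤ d) (h : ({a, b} : Multiset α) = {c, d}) : a = c ∧ b = d := by
  change ((↑[a, b] : Multiset α) = ↑[c, d]) at h
  rcases List.pair_perm.mp (Multiset.coe_eq_coe.mp h).symm with h | h <;>
    simp only [List.cons.injEq, and_true] at h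
  · exact h
  · obtain ⟨rfl, rfl⟩ := h
    exact ⟨le_antisymm hab hcd, le_antisymm hcd hab⟩

theorem tauGen_mul_tauGen (K : Type*) [Field K] (q : ℕ) (i j : Fin q) :
    tauGen K q i * tauGen K q j = MvPolynomial.monomial
      (Finsupp.equivFunOnFinite.symm fun σ : Equiv.Perm (Fin q) => (σ i : ℕ) + σ j + 2) 1 := by
  rw [tauGen, tauGen, ← prod_mul_distrib,
    ← MvPolynomial.prod_X_pow_eq_monomial_equivFunOnFinite]
  refine prod_congr rfl fun σ _ => ?_
  rw [← pow_add]
  ring_nf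

theorem card_mqVertex (q : ℕ) : Fintype.card (MqVertex q) = q.choose 2 + q := by
  rw [← Fintype.card_congr Sym2.sortEquiv, Sym2.card, Fintype.card_fin, Nat.choose_succ_succ',
    Nat.choose_one_right, add_comm]

theorem tau_mul_injective_general (K : Type*) [Field K] (q : ℕ) :
    Function.Injective (fun v : MqVertex q => tauGen K q v.1.1 * tauGen K q v.1.2) ∧
    Fintype.card (MqVertex q) = q.choose 2 + q := by
  refine ⟨?_, card_mqVertex q⟩
  rintro ⟨⟨i, j⟩, hij⟩ ⟨⟨i', j'⟩, hij'⟩ h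
  simp only [tauGen_mul_tauGen] at h
  have hexp := congrFun (Finsupp.equivFunOnFinite.symm.injective
    (MvPolynomial.monomial_left_injective one_ne_zero h))
  have hpair : ({i, j} : Multiset (Fin q)) = {i', j'} :=
    Multiset.eq_of_forall_perm_sum_map_eq_s10 (f := fun u : Fin q => (u : ℤ))
      (Nat.cast_injective.comp Fin.val_injective) rfl
      fun σ => by simpa using congrArg (fun n : ℕ => (n : ℤ)) (hexp σ)
  obtain ⟨rfl, rfl⟩ := Multiset.pair_eq_pair_of_le hij hij' hpair
  rfl

/-- The map sending a pair `(i,j)` with `i ≤ j` in `Fin q` to the monomial `τ_i τ_j` is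
injective; in particular the minimal generating set of `T_q²` has exactly
`C(q,2) + q` elements, which equals the number of vertices of `M_q²`. -/
theorem tau_mul_injective (K : Type*) [Field K] (q : ℕ) (hq : 0 < q) :
    Function.Injective (fun v : MqVertex q => tauGen K q v.1.1 * tauGen K q v.1.2) ∧
    Fintype.card (MqVertex q) = q.choose 2 + q :=
  tau_mul_injective_general K q
end

section
/- Let q ≥ 2, let γ be a finite set of pairs (a,b) with a ≤ b in Fin q, and let i, j ∈ Fin q and σ be a permutation of Fin q with (σ i : ℕ) + 1 = q and (σ j : ℕ) + 1 = q − 1. If (i,i) ∉ γ, then 2q − 1 ≤ E_γ(σ) if and only if γ contains the off-diagonal vertex with underlying unordered pair {i, j} (i.e., (i,j) ∈ γ if i ≤ j, and (j,i) ∈ γ otherwise). -/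
/-- The exponent of the variable `x_σ` in the lcm label `m_γ` of a finite set `γ` of vertices
of `M_q²`, where the vertex `(i,j)` is labeled by `τ_i τ_j`:
`E_γ(σ) = max_{(i,j) ∈ γ} (σ(i) + σ(j))`, with `σ(i) = (σ i : ℕ) + 1` the 1-indexed value
and the maximum of the empty set being `0`. -/
def Elabel (q : ℕ) (γ : Finset (MqVertex q)) (σ : Equiv.Perm (Fin q)) : ℕ :=
  γ.sup fun v => ((σ v.1.1 : ℕ) + 1) + ((σ v.1.2 : ℕ) + 1)

/-- Let `q ≥ 2`, let `γ` be a finite set of vertices of `M_q²`, and let `σ` be a permutation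
with `σ(i) = q` and `σ(j) = q - 1`. If the diagonal vertex `(i,i)` is not in `γ`, then
`2q - 1 ≤ E_γ(σ)` iff `γ` contains the off-diagonal vertex with underlying unordered pair
`{i, j}` (namely `(min i j, max i j)`); i.e. `x_σ^{2q-1} ∣ m_γ` iff `τ_i τ_j ∈ γ`. -/
theorem two_q_sub_one_le_Elabel_iff (q : ℕ) (hq : 2 ≤ q) (γ : Finset (MqVertex q))
    (i j : Fin q) (σ : Equiv.Perm (Fin q))
    (hi : (σ i : ℕ) + 1 = q) (hj : (σ j : ℕ) + 1 = q - 1)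
    (hdiag : (⟨(i, i), le_refl i⟩ : MqVertex q) ∉ γ) :
    2 * q - 1 ≤ Elabel q γ σ ↔
      (⟨(min i j, max i j), min_le_max⟩ : MqVertex q) ∈ γ := by
  have key_i : ∀ a : Fin q, (σ a : ℕ) + 1 = q → a = i := by
    intro a ha
    exact σ.injective (Fin.ext (by omega))
  have key_j : ∀ a : Fin q, (σ a : ℕ) + 1 = q - 1 → a = j := by
    intro a ha
    exact σ.injective (Fin.ext (by omega))
  constructor
  · intro h
    rw [Elabel, Finset.le_sup_iff (by omega : (0:ℕ) < 2 * q - 1)] at h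
    obtain ⟨v, hv, hle⟩ := h
    obtain ⟨⟨a, b⟩, hab⟩ := v
    simp only at hle
    have ha : (σ a : ℕ) < q := (σ a).isLt
    have hb : (σ b : ℕ) < q := (σ b).isLt
    -- each term is q or q-1
    have ha' : (σ a : ℕ) + 1 = q ∨ (σ a : ℕ) + 1 = q - 1 := by omega
    have hb' : (σ b : ℕ) + 1 = q ∨ (σ b : ℕ) + 1 = q - 1 := by omega
    rcases ha' with ha' | ha' <;> rcases hb' with hb' | hb'
    · -- a = i, b = i : contradiction with hdiag
      have e1 := key_i a ha'
      have e2 := key_i b hb'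
      subst e1; subst e2
      exact absurd hv hdiag
    · have e1 := key_i a ha'
      have e2 := key_j b hb'
      subst e1; subst e2
      have : min a b = a ∧ max a b = b := ⟨min_eq_left hab, max_eq_right hab⟩
      convert hv using 2
      exact Prod.ext this.1 this.2
    · have e1 := key_j a ha'
      have e2 := key_i b hb'
      subst e1; subst e2
      have : min b a = a ∧ max b a = b := ⟨min_eq_right hab, max_eq_left hab⟩
      convert hv using 2
      exact Prod.ext this.1 this.2
    · -- both q - 1: sum 2q-2 < 2q-1
      omega
  · intro h
    calc 2 * q - 1 = ((σ (min i j) : ℕ) + 1) + ((σ (max i j) : ℕ) + 1) := by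
          rcases le_total i j with hle | hle
          · rw [min_eq_left hle, max_eq_right hle]; omega
          · rw [min_eq_right hle, max_eq_left hle]; omega
      _ ≤ Elabel q γ σ := Finset.le_sup (f := fun v : MqVertex q => ((σ v.1.1 : ℕ) + 1) + ((σ v.1.2 : ℕ) + 1)) h
end

section
/- Let q ≥ 2 and k ∈ Fin q. For every permutation σ of Fin q, the maximum over all vertices of the facet M_k = M ∪ {(k,k)} of M_q² of ((σ i : ℕ) + 1) + ((σ j : ℕ) + 1) equals 2q if (σ k : ℕ) + 1 = q, and equals 2q − 1 otherwise. (Equivalently, m_{M_k} = ∏_{σ(k)=q} x_σ^{2q} · ∏_{σ(k)≠q} x_σ^{2q−1}.) -/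
/-! Off the diagonal two distinct values of `σ` are added, so the largest sum is
`q + (q - 1)`, attained at the pair `σ⁻¹(q), σ⁻¹(q - 1)`; the diagonal vertex `(k,k)` adds
`2σ(k)`, which exceeds that only when `σ(k) = q`. -/

def offDiag (q : ℕ) : Finset (MqVertex q) :=
  Finset.univ.filter fun v => v.1.1 < v.1.2

lemma Elabel_insert (q : ℕ) (v : MqVertex q) (γ : Finset (MqVertex q))
    (σ : Equiv.Perm (Fin q)) :
    Elabel q (insert v γ) σ = ((σ v.1.1 : ℕ) + 1 + ((σ v.1.2 : ℕ) + 1)) ⊔ Elabel q γ σ :=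
  Finset.sup_insert

lemma le_Elabel_of_mem {q : ℕ} {v : MqVertex q} {γ : Finset (MqVertex q)} (hv : v ∈ γ)
    (σ : Equiv.Perm (Fin q)) :
    (σ v.1.1 : ℕ) + 1 + ((σ v.1.2 : ℕ) + 1) ≤ Elabel q γ σ :=
  Finset.le_sup (f := fun v : MqVertex q => (σ v.1.1 : ℕ) + 1 + ((σ v.1.2 : ℕ) + 1)) hv

lemma Fin.val_add_val_le_of_ne {q : ℕ} {a b : Fin q} (hab : a ≠ b) :
    (a : ℕ) + 1 + ((b : ℕ) + 1) ≤ 2 * q - 1 := by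
  have := Fin.val_ne_of_ne hab
  omega

lemma Elabel_offDiag_le (q : ℕ) (σ : Equiv.Perm (Fin q)) :
    Elabel q (offDiag q) σ ≤ 2 * q - 1 := by
  refine Finset.sup_le fun v hv => Fin.val_add_val_le_of_ne <| σ.injective.ne ?_
  exact (Finset.mem_filter.mp hv).2.ne

lemma le_Elabel_offDiag {q : ℕ} (σ : Equiv.Perm (Fin q)) {i j : Fin q} (hij : i ≠ j) :
    (σ i : ℕ) + 1 + ((σ j : ℕ) + 1) ≤ Elabel q (offDiag q) σ := by
  have hmem : (⟨(min i j, max i j), min_le_max⟩ : MqVertex q) ∈ offDiag q := by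
    simpa [offDiag] using hij.symm
  calc (σ i : ℕ) + 1 + ((σ j : ℕ) + 1)
      = (σ (min i j) : ℕ) + 1 + ((σ (max i j) : ℕ) + 1) := by
        rcases le_total i j with h | h
        · rw [min_eq_left h, max_eq_right h]
        · rw [min_eq_right h, max_eq_left h, add_comm]
    _ ≤ Elabel q (offDiag q) σ := le_Elabel_of_mem hmem σ

lemma Elabel_offDiag {q : ℕ} (hq : 2 ≤ q) (σ : Equiv.Perm (Fin q)) :
    Elabel q (offDiag q) σ = 2 * q - 1 := by
  refine le_antisymm (Elabel_offDiag_le q σ) ?_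
  let top : Fin q := ⟨q - 1, by omega⟩
  let next : Fin q := ⟨q - 2, by omega⟩
  have hne : σ.symm top ≠ σ.symm next :=
    σ.symm.injective.ne <| Fin.ne_of_val_ne (by simp only [top, next]; omega)
  have := le_Elabel_offDiag σ hne
  simp only [Equiv.apply_symm_apply, top, next] at this
  omega

theorem Elabel_facet_general (q : ℕ) (k : Fin q) (σ : Equiv.Perm (Fin q)) :
    Elabel q
        (insert (⟨(k, k), le_refl k⟩ : MqVertex q)
          (Finset.univ.filter fun v : MqVertex q => v.1.1 < v.1.2)) σ
      = if (σ k : ℕ) + 1 = q then 2 * q else 2 * q - 1 := by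
  change Elabel q (insert _ (offDiag q)) σ = _
  rw [Elabel_insert]
  dsimp only
  have hk := (σ k).isLt
  have hle := Elabel_offDiag_le q σ
  split_ifs with h
  · omega
  · have := Elabel_offDiag (by omega) σ
    omega

/-- For `q ≥ 2`, `k : Fin q` and any permutation `σ`, the maximum over the vertices of the
facet `M_k = M ∪ {(k,k)}` of `M_q²` of `σ(i) + σ(j)` equals `2q` if `σ(k) = q` and `2q - 1`
otherwise; i.e. `m_{M_k} = ∏_{σ(k)=q} x_σ^{2q} ⬝ ∏_{σ(k)≠q} x_σ^{2q-1}`. -/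
theorem Elabel_facet (q : ℕ) (hq : 2 ≤ q) (k : Fin q) (σ : Equiv.Perm (Fin q)) :
    Elabel q
        (insert (⟨(k, k), le_refl k⟩ : MqVertex q)
          (Finset.univ.filter fun v : MqVertex q => v.1.1 < v.1.2)) σ
      = if (σ k : ℕ) + 1 = q then 2 * q else 2 * q - 1 :=
  Elabel_facet_general q k σ
end

section
/- Let q ≥ 1 and let γ₁, γ₂ be two faces of M_q², i.e., finite sets of pairs (i,j) with i ≤ j in Fin q each containing at most one diagonal pair (i,i). If their lcm labels agree, i.e., E_{γ₁}(σ) = E_{γ₂}(σ) for every permutation σ of Fin q, then γ₁ = γ₂. In other words, distinct faces of M_q² have distinct monomial labels with respect to the generators of T_q². -/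
lemma exists_perm_two {q : ℕ} {i j a b : Fin q} (hij : i ≠ j) (hab : a ≠ b) :
    ∃ σ : Equiv.Perm (Fin q), σ i = a ∧ σ j = b := by
  refine ⟨(Equiv.swap i a).trans (Equiv.swap ((Equiv.swap i a) j) b), ?_, ?_⟩
  · simp only [Equiv.trans_apply, Equiv.swap_apply_left]
    apply Equiv.swap_apply_of_ne_of_ne
    · intro hcontra
      apply hij
      apply (Equiv.swap i a).injective
      rw [Equiv.swap_apply_left]
      exact hcontra
    · exact hab
  · simp only [Equiv.trans_apply, Equiv.swap_apply_left]

/-- Characterization of when the label reaches `2q`: exactly when the diagonal vertex at the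
preimage of the top value is in `γ`. -/
lemma top_le_Elabel_iff (q : ℕ) (hq : 1 ≤ q) (γ : Finset (MqVertex q)) (σ : Equiv.Perm (Fin q))
    (d : Fin q) (hd : (σ d : ℕ) = q - 1) :
    2 * q ≤ Elabel q γ σ ↔ (⟨(d, d), le_refl d⟩ : MqVertex q) ∈ γ := by
  constructor
  · intro hE
    rw [Elabel, Finset.le_sup_iff (by positivity)] at hE
    obtain ⟨v, hv, hle⟩ := hE
    have h1 : ((σ v.1.1 : ℕ)) < q := (σ v.1.1).isLt
    have h2 : ((σ v.1.2 : ℕ)) < q := (σ v.1.2).isLt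
    have e1 : (σ v.1.1 : ℕ) = q - 1 := by omega
    have e2 : (σ v.1.2 : ℕ) = q - 1 := by omega
    have hv1 : v.1.1 = d := σ.injective (Fin.ext (by rw [e1, hd]))
    have hv2 : v.1.2 = d := σ.injective (Fin.ext (by rw [e2, hd]))
    have : v = (⟨(d, d), le_refl d⟩ : MqVertex q) := by
      apply Subtype.ext; exact Prod.ext hv1 hv2
    rwa [this] at hv
  · intro hmem
    have := Finset.le_sup (f := fun v : MqVertex q =>
      ((σ v.1.1 : ℕ) + 1) + ((σ v.1.2 : ℕ) + 1)) hmem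
    simp only at this
    rw [Elabel]
    calc 2 * q = ((σ d : ℕ) + 1) + ((σ d : ℕ) + 1) := by rw [hd]; omega
    _ ≤ _ := this

/-- Characterization of when the label reaches `2q - 1`, for a permutation sending `{i,j}` to
the top two values `{q-1, q-2}`. -/
lemma near_top_le_Elabel_iff (q : ℕ) (γ : Finset (MqVertex q)) (i j d : Fin q) (hij : i < j)
    (σ : Equiv.Perm (Fin q)) (hsum : (σ i : ℕ) + (σ j : ℕ) = 2 * q - 3)
    (hd : (σ d : ℕ) = q - 1) :
    2 * q - 1 ≤ Elabel q γ σ ↔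
      (⟨(i, j), hij.le⟩ : MqVertex q) ∈ γ ∨ (⟨(d, d), le_refl d⟩ : MqVertex q) ∈ γ := by
  have hq2 : 2 ≤ q := by
    have h1 := j.isLt
    have h2 : (i : ℕ) < (j : ℕ) := hij
    omega
  constructor
  · intro hE
    rw [Elabel, Finset.le_sup_iff (show (0:ℕ) < 2 * q - 1 by omega)] at hE
    obtain ⟨v, hv, hle⟩ := hE
    set a := v.1.1 with ha
    set b := v.1.2 with hb
    have hab : a ≤ b := v.2
    have h1 : ((σ a : ℕ)) < q := (σ a).isLt
    have h2 : ((σ b : ℕ)) < q := (σ b).isLt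
    by_cases hdiag : a = b
    · -- diagonal vertex: forces σ a = q - 1 = σ d
      right
      have : (σ a : ℕ) = q - 1 := by rw [← hdiag] at hle; omega
      have had : a = d := σ.injective (Fin.ext (by rw [this, hd]))
      have hbd : b = d := by rw [← hdiag]; exact had
      have : v = (⟨(d, d), le_refl d⟩ : MqVertex q) := by
        apply Subtype.ext; exact Prod.ext had hbd
      rwa [this] at hv
    · -- off-diagonal: {σ a, σ b} = {q-1, q-2} = {σ i, σ j}
      left
      have hne : (σ a : ℕ) ≠ (σ b : ℕ) := by
        intro hc; exact hdiag (σ.injective (Fin.ext hc))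
      have hi1 : ((σ i : ℕ)) < q := (σ i).isLt
      have hj1 : ((σ j : ℕ)) < q := (σ j).isLt
      have hcases : ((σ a : ℕ) = (σ i : ℕ) ∧ (σ b : ℕ) = (σ j : ℕ)) ∨
          ((σ a : ℕ) = (σ j : ℕ) ∧ (σ b : ℕ) = (σ i : ℕ)) := by omega
      rcases hcases with ⟨ea, eb⟩ | ⟨ea, eb⟩
      · have hva : a = i := σ.injective (Fin.ext ea)
        have hvb : b = j := σ.injective (Fin.ext eb)
        have : v = (⟨(i, j), hij.le⟩ : MqVertex q) := by
          apply Subtype.ext; exact Prod.ext hva hvb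
        rwa [this] at hv
      · exfalso
        have hva : a = j := σ.injective (Fin.ext ea)
        have hvb : b = i := σ.injective (Fin.ext eb)
        have : (j : ℕ) ≤ (i : ℕ) := by rw [← hva, ← hvb]; exact hab
        have : (i : ℕ) < (j : ℕ) := hij
        omega
  · rintro (hmem | hmem)
    · have := Finset.le_sup (f := fun v : MqVertex q =>
        ((σ v.1.1 : ℕ) + 1) + ((σ v.1.2 : ℕ) + 1)) hmem
      simp only at this
      rw [Elabel]
      omega
    · have := Finset.le_sup (f := fun v : MqVertex q =>
        ((σ v.1.1 : ℕ) + 1) + ((σ v.1.2 : ℕ) + 1)) hmem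
      simp only [hd] at this
      rw [Elabel]
      omega

lemma faces_subset (q : ℕ) (hq : 1 ≤ q) (γ₁ γ₂ : Finset (MqVertex q))
    (h₂ : (γ₂.filter fun v => v.1.1 = v.1.2).card ≤ 1)
    (h : ∀ σ : Equiv.Perm (Fin q), Elabel q γ₁ σ = Elabel q γ₂ σ) :
    γ₁ ⊆ γ₂ := by
  intro v hv
  obtain ⟨⟨i, j⟩, hij⟩ := v
  by_cases hd : i = j
  · -- diagonal vertex
    subst hd
    set t : Fin q := ⟨q - 1, by omega⟩ with ht
    set σ : Equiv.Perm (Fin q) := Equiv.swap i t with hσ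
    have hσi : (σ i : ℕ) = q - 1 := by
      rw [hσ, Equiv.swap_apply_left]
    have key₁ := top_le_Elabel_iff q hq γ₁ σ i hσi
    have key₂ := top_le_Elabel_iff q hq γ₂ σ i hσi
    have hmem : (⟨(i, i), le_refl i⟩ : MqVertex q) ∈ γ₁ := hv
    have : 2 * q ≤ Elabel q γ₁ σ := key₁.mpr hmem
    rw [h σ] at this
    exact key₂.mp this
  · -- off-diagonal vertex
    have hlt : i < j := lt_of_le_of_ne hij hd
    have hq2 : 2 ≤ q := by
      have h1 := j.isLt
      have h2 : (i : ℕ) < (j : ℕ) := hlt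
      omega
    set t1 : Fin q := ⟨q - 1, by omega⟩ with ht1
    set t2 : Fin q := ⟨q - 2, by omega⟩ with ht2
    have ht12 : t1 ≠ t2 := by
      intro hc
      have : q - 1 = q - 2 := congrArg Fin.val hc
      omega
    obtain ⟨σ₁, hσ₁i, hσ₁j⟩ := exists_perm_two (q := q) hd ht12
    obtain ⟨σ₂, hσ₂i, hσ₂j⟩ := exists_perm_two (q := q) hd ht12.symm
    have hsum₁ : (σ₁ i : ℕ) + (σ₁ j : ℕ) = 2 * q - 3 := by
      rw [hσ₁i, hσ₁j]; show (q - 1) + (q - 2) = 2 * q - 3; omega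
    have hsum₂ : (σ₂ i : ℕ) + (σ₂ j : ℕ) = 2 * q - 3 := by
      rw [hσ₂i, hσ₂j]; show (q - 2) + (q - 1) = 2 * q - 3; omega
    have hd₁ : (σ₁ i : ℕ) = q - 1 := by rw [hσ₁i]
    have hd₂ : (σ₂ j : ℕ) = q - 1 := by rw [hσ₂j]
    have key₁ := near_top_le_Elabel_iff q γ₁ i j i hlt σ₁ hsum₁ hd₁
    have key₂ := near_top_le_Elabel_iff q γ₂ i j i hlt σ₁ hsum₁ hd₁
    have key₁' := near_top_le_Elabel_iff q γ₁ i j j hlt σ₂ hsum₂ hd₂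
    have key₂' := near_top_le_Elabel_iff q γ₂ i j j hlt σ₂ hsum₂ hd₂
    have hmem : (⟨(i, j), hlt.le⟩ : MqVertex q) ∈ γ₁ := hv
    by_contra hnv
    have hnv' : (⟨(i, j), hlt.le⟩ : MqVertex q) ∉ γ₂ := hnv
    have hii : (⟨(i, i), le_refl i⟩ : MqVertex q) ∈ γ₂ := by
      have : 2 * q - 1 ≤ Elabel q γ₁ σ₁ := key₁.mpr (Or.inl hmem)
      rw [h σ₁] at this
      rcases key₂.mp this with hc | hc
      · exact absurd hc hnv'
      · exact hc
    have hjj : (⟨(j, j), le_refl j⟩ : MqVertex q) ∈ γ₂ := by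
      have : 2 * q - 1 ≤ Elabel q γ₁ σ₂ := key₁'.mpr (Or.inl hmem)
      rw [h σ₂] at this
      rcases key₂'.mp this with hc | hc
      · exact absurd hc hnv'
      · exact hc
    -- γ₂ contains two distinct diagonal vertices: contradiction with h₂
    have hii' : (⟨(i, i), le_refl i⟩ : MqVertex q) ∈ γ₂.filter fun v => v.1.1 = v.1.2 :=
      Finset.mem_filter.mpr ⟨hii, rfl⟩
    have hjj' : (⟨(j, j), le_refl j⟩ : MqVertex q) ∈ γ₂.filter fun v => v.1.1 = v.1.2 :=
      Finset.mem_filter.mpr ⟨hjj, rfl⟩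
    have hne : (⟨(i, i), le_refl i⟩ : MqVertex q) ≠ ⟨(j, j), le_refl j⟩ := by
      intro hc
      exact hd (congrArg (fun v : MqVertex q => v.1.1) hc)
    have : 1 < (γ₂.filter fun v => v.1.1 = v.1.2).card :=
      Finset.one_lt_card.mpr ⟨_, hii', _, hjj', hne⟩
    omega

/-- Two faces of `M_q²` (finite sets of vertices containing at most one diagonal vertex) whose
lcm labels agree at every variable `x_σ` are equal: distinct faces of `M_q²` have distinct
monomial labels with respect to the generators of `T_q²`. -/
theorem faces_distinct_labels (q : ℕ) (hq : 1 ≤ q) (γ₁ γ₂ : Finset (MqVertex q))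
    (h₁ : (γ₁.filter fun v => v.1.1 = v.1.2).card ≤ 1)
    (h₂ : (γ₂.filter fun v => v.1.1 = v.1.2).card ≤ 1)
    (h : ∀ σ : Equiv.Perm (Fin q), Elabel q γ₁ σ = Elabel q γ₂ σ) :
    γ₁ = γ₂ := by
  apply Finset.Subset.antisymm
  · exact faces_subset q hq γ₁ γ₂ h₂ h
  · exact faces_subset q hq γ₂ γ₁ h₁ (fun σ => (h σ).symm)
end

section
/- Let q ≥ 1 and let γ be any finite set of pairs (i,j) with i ≤ j in Fin q (a face of the Taylor complex of T_q²). Then the label E_γ is distinct from E_{γ'} for every other such set γ' ≠ γ if and only if γ contains at most one diagonal pair (i,i). In other words, the Scarf complex of T_q² coincides with the simplicial complex M_q²: Scarf(T_q²) = M_q². -/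
namespace ScarfAux

def diagV {q : ℕ} (i : Fin q) : MqVertex q := ⟨(i, i), le_refl i⟩

lemma sorted_unique {q : ℕ} {i j : Fin q} (hij : i ≠ j) {v w : MqVertex q}
    (hv : v.1 = (i, j) ∨ v.1 = (j, i)) (hw : w.1 = (i, j) ∨ w.1 = (j, i)) : v = w := by
  have hv2 := v.2
  have hw2 := w.2
  rcases hv with h | h <;> rcases hw with h' | h'
  · exact Subtype.ext (h.trans h'.symm)
  · rw [h] at hv2; rw [h'] at hw2
    exact absurd (le_antisymm hv2 hw2) hij
  · rw [h] at hv2; rw [h'] at hw2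
    exact absurd (le_antisymm hw2 hv2) hij
  · exact Subtype.ext (h.trans h'.symm)

lemma exists_perm_two {n : ℕ} (i j : Fin (n + 1)) (hij : i ≠ j) :
    ∃ σ : Equiv.Perm (Fin (n + 1)), σ i = Fin.last n ∧ (σ j : ℕ) = n - 1 := by
  have hn : 1 ≤ n := by
    by_contra h
    have h0 : n = 0 := by omega
    subst h0
    have hi2 := i.2
    have hj2 := j.2
    exact hij (Fin.ext (by omega))
  set σ₁ := Equiv.swap i (Fin.last n) with hσ₁
  have h1i : σ₁ i = Fin.last n := Equiv.swap_apply_left _ _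
  have hj' : σ₁ j ≠ Fin.last n := by
    rw [← h1i]
    exact fun h => hij ((σ₁.injective h).symm)
  have hpl : (⟨n - 1, by omega⟩ : Fin (n + 1)) ≠ Fin.last n :=
    Fin.ne_of_val_ne (by show n - 1 ≠ n; omega)
  refine ⟨σ₁.trans (Equiv.swap (σ₁ j) ⟨n - 1, by omega⟩), ?_, ?_⟩
  · simp only [Equiv.trans_apply, h1i]
    exact Equiv.swap_apply_of_ne_of_ne (Ne.symm hj') (Ne.symm hpl)
  · simp only [Equiv.trans_apply, Equiv.swap_apply_left]

lemma diag_mem_iff {n : ℕ} (γ : Finset (MqVertex (n + 1))) (i : Fin (n + 1))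
    (σ : Equiv.Perm (Fin (n + 1))) (hσ : σ i = Fin.last n) :
    diagV i ∈ γ ↔ 2 * n + 2 ≤ Elabel (n + 1) γ σ := by
  have hvi : (σ i : ℕ) = n := by rw [hσ]; rfl
  have hkey : ∀ k : Fin (n + 1), k ≠ i → (σ k : ℕ) < n := by
    intro k hk
    have h1 : (σ k : ℕ) ≤ n := Fin.is_le _
    have h2 : σ k ≠ σ i := fun h => hk (σ.injective h)
    have h3 : (σ k : ℕ) ≠ n := fun h => h2 (Fin.ext (by rw [h, hvi]))
    omega
  constructor
  · intro hmem
    have hle : ((σ i : ℕ) + 1) + ((σ i : ℕ) + 1) ≤ Elabel (n + 1) γ σ := by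
      exact Finset.le_sup (f := fun v : MqVertex (n + 1) =>
        ((σ v.1.1 : ℕ) + 1) + ((σ v.1.2 : ℕ) + 1)) hmem
    omega
  · intro hle
    by_contra hmem
    have hb : Elabel (n + 1) γ σ ≤ 2 * n + 1 := by
      apply Finset.sup_le
      intro w hw
      have hne : w ≠ diagV i := fun h => hmem (h ▸ hw)
      have hcoord : w.1.1 ≠ i ∨ w.1.2 ≠ i := by
        by_contra h
        push_neg at h
        exact hne (Subtype.ext (Prod.ext h.1 h.2))
      have b1 : (σ w.1.1 : ℕ) ≤ n := Fin.is_le _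
      have b2 : (σ w.1.2 : ℕ) ≤ n := Fin.is_le _
      rcases hcoord with h | h
      · have := hkey _ h; omega
      · have := hkey _ h; omega
    omega

lemma off_mem_iff {n : ℕ} (γ : Finset (MqVertex (n + 1))) (i j : Fin (n + 1)) (hij : i ≠ j)
    (σ : Equiv.Perm (Fin (n + 1))) (hσi : σ i = Fin.last n) (hσj : (σ j : ℕ) = n - 1)
    (v : MqVertex (n + 1)) (hv : v.1 = (i, j) ∨ v.1 = (j, i))
    (hdiag : diagV i ∉ γ) :
    v ∈ γ ↔ 2 * n + 1 ≤ Elabel (n + 1) γ σ := by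
  have hn : 1 ≤ n := by
    by_contra h
    have h0 : n = 0 := by omega
    subst h0
    have hi2 := i.2
    have hj2 := j.2
    exact hij (Fin.ext (by omega))
  have hvi : (σ i : ℕ) = n := by rw [hσi]; rfl
  have tri : ∀ k : Fin (n + 1),
      (σ k : ℕ) + 2 ≤ n ∨ ((σ k : ℕ) = n ∧ k = i) ∨ ((σ k : ℕ) = n - 1 ∧ k = j) := by
    intro k
    by_cases h1 : k = i
    · subst h1; exact Or.inr (Or.inl ⟨hvi, rfl⟩)
    by_cases h2 : k = j
    · subst h2; exact Or.inr (Or.inr ⟨hσj, rfl⟩)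
    left
    have b : (σ k : ℕ) ≤ n := Fin.is_le _
    have e1 : (σ k : ℕ) ≠ n := by
      intro h
      exact h1 (σ.injective (Fin.ext (by rw [h, hvi])))
    have e2 : (σ k : ℕ) ≠ n - 1 := by
      intro h
      exact h2 (σ.injective (Fin.ext (by rw [h, hσj])))
    omega
  have hfv : ((σ v.1.1 : ℕ) + 1) + ((σ v.1.2 : ℕ) + 1) = 2 * n + 1 := by
    rcases hv with h | h <;> rw [h] <;> simp only [hvi, hσj] <;> omega
  constructor
  · intro hmem
    have hle : ((σ v.1.1 : ℕ) + 1) + ((σ v.1.2 : ℕ) + 1) ≤ Elabel (n + 1) γ σ := by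
      exact Finset.le_sup (f := fun w : MqVertex (n + 1) =>
        ((σ w.1.1 : ℕ) + 1) + ((σ w.1.2 : ℕ) + 1)) hmem
    omega
  · intro hle
    by_contra hmem
    have hb : Elabel (n + 1) γ σ ≤ 2 * n := by
      apply Finset.sup_le
      intro w hw
      have hnv : w ≠ v := fun h => hmem (h ▸ hw)
      have hnd : w ≠ diagV i := fun h => hdiag (h ▸ hw)
      rcases tri w.1.1 with h1 | ⟨h1v, h1⟩ | ⟨h1v, h1⟩ <;>
        rcases tri w.1.2 with h2 | ⟨h2v, h2⟩ | ⟨h2v, h2⟩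
      all_goals try omega
      · exact absurd (Subtype.ext (Prod.ext h1 h2)) hnd
      · exact absurd (sorted_unique hij (Or.inl (Prod.ext h1 h2)) hv) hnv
      · exact absurd (sorted_unique hij (Or.inr (Prod.ext h1 h2)) hv) hnv
    omega

lemma two_diag_not_scarf {n : ℕ} (γ : Finset (MqVertex (n + 1))) {i j : Fin (n + 1)}
    (hij : i < j) (hi : diagV i ∈ γ) (hj : diagV j ∈ γ) :
    ∃ γ', γ' ≠ γ ∧ Elabel (n + 1) γ' = Elabel (n + 1) γ := by
  set v : MqVertex (n + 1) := ⟨(i, j), le_of_lt hij⟩ with hvdef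
  have hbound : ∀ (s : Finset (MqVertex (n + 1))) (σ : Equiv.Perm (Fin (n + 1))),
      diagV i ∈ s → diagV j ∈ s →
      ((σ v.1.1 : ℕ) + 1) + ((σ v.1.2 : ℕ) + 1) ≤
        s.sup (fun w => ((σ w.1.1 : ℕ) + 1) + ((σ w.1.2 : ℕ) + 1)) := by
    intro s σ h1 h2
    have g1 : ((σ i : ℕ) + 1) + ((σ i : ℕ) + 1) ≤
        s.sup (fun w : MqVertex (n + 1) => ((σ w.1.1 : ℕ) + 1) + ((σ w.1.2 : ℕ) + 1)) := by
      exact Finset.le_sup (f := fun w : MqVertex (n + 1) =>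
        ((σ w.1.1 : ℕ) + 1) + ((σ w.1.2 : ℕ) + 1)) h1
    have g2 : ((σ j : ℕ) + 1) + ((σ j : ℕ) + 1) ≤
        s.sup (fun w : MqVertex (n + 1) => ((σ w.1.1 : ℕ) + 1) + ((σ w.1.2 : ℕ) + 1)) := by
      exact Finset.le_sup (f := fun w : MqVertex (n + 1) =>
        ((σ w.1.1 : ℕ) + 1) + ((σ w.1.2 : ℕ) + 1)) h2
    show ((σ i : ℕ) + 1) + ((σ j : ℕ) + 1) ≤ _
    omega
  by_cases hv : v ∈ γ
  · refine ⟨γ.erase v, ?_, ?_⟩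
    · intro h
      rw [Finset.erase_eq_self] at h
      exact h hv
    · funext σ
      apply le_antisymm
      · exact Finset.sup_mono (Finset.erase_subset _ _)
      · apply Finset.sup_le
        intro w hw
        by_cases hwv : w = v
        · subst hwv
          apply hbound
          · refine Finset.mem_erase.mpr ⟨?_, hi⟩
            intro h
            have hc : i = j := congrArg (fun x : MqVertex (n + 1) => x.1.2) h
            exact hij.ne hc
          · refine Finset.mem_erase.mpr ⟨?_, hj⟩
            intro h
            have hc : j = i := congrArg (fun x : MqVertex (n + 1) => x.1.1) h
            exact hij.ne' hc
        · exact Finset.le_sup (f := fun u : MqVertex (n + 1) =>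
            ((σ u.1.1 : ℕ) + 1) + ((σ u.1.2 : ℕ) + 1)) (Finset.mem_erase.mpr ⟨hwv, hw⟩)
  · refine ⟨insert v γ, ?_, ?_⟩
    · intro h
      rw [Finset.insert_eq_self] at h
      exact hv h
    · funext σ
      simp only [Elabel, Finset.sup_insert]
      exact sup_eq_right.mpr (hbound γ σ hi hj)

end ScarfAux

open ScarfAux in
/-- A face `γ` of the Taylor complex of `T_q²` (an arbitrary finite set of vertices `(i,j)`,
`i ≤ j`, labeled by `τ_i τ_j`) has an lcm label distinct from that of every other face if and
only if `γ` contains at most one diagonal vertex; i.e. `Scarf(T_q²) = M_q²`. -/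
theorem scarf_eq_Mq (q : ℕ) (hq : 1 ≤ q) (γ : Finset (MqVertex q)) :
    (∀ γ' : Finset (MqVertex q), γ' ≠ γ → Elabel q γ' ≠ Elabel q γ) ↔
      (γ.filter fun v => v.1.1 = v.1.2).card ≤ 1 := by
  obtain ⟨n, rfl⟩ : ∃ n, q = n + 1 := ⟨q - 1, by omega⟩
  constructor
  · intro h
    by_contra hcard
    push_neg at hcard
    obtain ⟨a, ha, b, hb, hab⟩ := Finset.one_lt_card.mp hcard
    rw [Finset.mem_filter] at ha hb
    have ha' : a = diagV a.1.1 := Subtype.ext (Prod.ext rfl ha.2.symm)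
    have hb' : b = diagV b.1.1 := Subtype.ext (Prod.ext rfl hb.2.symm)
    have hij : a.1.1 ≠ b.1.1 := by
      intro hE
      exact hab (ha'.trans (by rw [hE, ← hb']))
    have hi : diagV a.1.1 ∈ γ := ha' ▸ ha.1
    have hj : diagV b.1.1 ∈ γ := hb' ▸ hb.1
    rcases lt_or_gt_of_ne hij with hlt | hlt
    · obtain ⟨γ', h1, h2⟩ := two_diag_not_scarf γ hlt hi hj
      exact h γ' h1 h2
    · obtain ⟨γ', h1, h2⟩ := two_diag_not_scarf γ hlt hj hi
      exact h γ' h1 h2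
  · intro hcard γ' hne hEq
    apply hne
    have hdiag : ∀ i : Fin (n + 1), diagV i ∈ γ' ↔ diagV i ∈ γ := by
      intro i
      have hσ : (Equiv.swap i (Fin.last n)) i = Fin.last n := Equiv.swap_apply_left _ _
      rw [diag_mem_iff γ' i _ hσ, diag_mem_iff γ i _ hσ, hEq]
    ext w
    by_cases hw : w.1.1 = w.1.2
    · have hwd : w = diagV w.1.1 := Subtype.ext (Prod.ext rfl hw.symm)
      rw [hwd]
      exact hdiag _
    · have hnotboth : diagV w.1.1 ∉ γ ∨ diagV w.1.2 ∉ γ := by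
        by_contra hcon
        push_neg at hcon
        have h1 : diagV w.1.1 ∈ γ.filter (fun v => v.1.1 = v.1.2) :=
          Finset.mem_filter.mpr ⟨hcon.1, rfl⟩
        have h2 : diagV w.1.2 ∈ γ.filter (fun v => v.1.1 = v.1.2) :=
          Finset.mem_filter.mpr ⟨hcon.2, rfl⟩
        have hne12 : diagV w.1.1 ≠ diagV w.1.2 := by
          intro h
          exact hw (congrArg (fun x : MqVertex (n + 1) => x.1.1) h)
        have := Finset.one_lt_card.mpr ⟨_, h1, _, h2, hne12⟩
        omega
      rcases hnotboth with hnot | hnot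
      · obtain ⟨σ, hσ1, hσ2⟩ := exists_perm_two w.1.1 w.1.2 hw
        have hnot' : diagV w.1.1 ∉ γ' := fun h => hnot ((hdiag _).mp h)
        rw [off_mem_iff γ' w.1.1 w.1.2 hw σ hσ1 hσ2 w (Or.inl rfl) hnot',
          off_mem_iff γ w.1.1 w.1.2 hw σ hσ1 hσ2 w (Or.inl rfl) hnot, hEq]
      · obtain ⟨σ, hσ1, hσ2⟩ := exists_perm_two w.1.2 w.1.1 (Ne.symm hw)
        have hnot' : diagV w.1.2 ∉ γ' := fun h => hnot ((hdiag _).mp h)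
        rw [off_mem_iff γ' w.1.2 w.1.1 (Ne.symm hw) σ hσ1 hσ2 w (Or.inr rfl) hnot',
          off_mem_iff γ w.1.2 w.1.1 (Ne.symm hw) σ hσ1 hσ2 w (Or.inr rfl) hnot, hEq]
end
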